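/- Let C₄ = {e,(1234),(13)(24),(1432)} ⊆ S₄ act on ℤ⁴ row vectors on the right via permutation matrices, and let J = diag(0,1,1,1), T₂ = [[0,0,0,0],[0,1,0,0],[0,0,1,0],[0,1,1,1]], T₃ = [[0,0,0,0],[0,1,0,0],[0,0,1,1],[0,1,1,0]], T₄ = [[0,0,0,0],[0,1,1,0],[0,0,0,1],[0,1,0,0]] (4×4 integer matrices). With Ψ and S as before (Ψ = I + [[1,0,0,0],[0,1,0,0],[0,0,1,1],[0,0,0,-1]] + [[1,0,0,0],[0,1,1,1],[0,0,-1,-1],[0,0,1,0]] + [[1,1,1,1],[0,-1,-1,-1],[0,1,0,0],[0,0,1,0]], S = [[1,0,0,0],[0,1,0,0],[0,0,1,0],[-1,-1,-1,1]]), the identity ((ΨS·∑_{σ∈C₄}σ))^{-∗}·J = (∑_{σ∈C₄}σ)·(T₂+T₃+T₄+J) holds in the matrix ring ℚ[M₄(ℤ)], where for Γ = ∑aₖMₖ in ℚ[GL₄(ℤ)] we write Γ^{-∗} = ∑aₖMₖ^{-1}. -/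

import Mathlib

/-- 4×4 integer matrices. -/
abbrev M4 : Type := Matrix (Fin 4) (Fin 4) ℤ

/-- The ℚ-algebra spanned freely by 4×4 integer matrices (containing the group
ring ℚ[GL₄(ℤ)] as the span of the invertible matrices). -/
abbrev QM4 : Type := MonoidAlgebra ℚ M4

/-- The canonical embedding of a matrix into the monoid algebra. -/
noncomputable def emb (M : M4) : QM4 := MonoidAlgebra.single M 1

/-- Permutation matrix `(δ_{i σ(j)})` of `σ ∈ S₄`. -/
def pm (σ : Equiv.Perm (Fin 4)) : M4 := Matrix.of fun i j => if i = σ j then 1 else 0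

/-- The shuffle element sh(2,4) = ∑_{σ(1)<σ(2), σ(3)<σ(4)} σ. -/
noncomputable def sh24 : QM4 :=
  ∑ σ ∈ Finset.univ.filter (fun σ : Equiv.Perm (Fin 4) => σ 0 < σ 1 ∧ σ 2 < σ 3), emb (pm σ)

/-- The element Φ. -/
noncomputable def Phi : QM4 :=
  emb 1 + emb !![1,0,0,0; 0,1,1,0; 0,0,-1,0; 0,0,1,1]
    + emb !![1,1,1,0; 0,-1,-1,0; 0,1,0,0; 0,0,1,1]

/-- The element Ψ. -/
noncomputable def Psi : QM4 :=
  emb 1 + emb !![1,0,0,0; 0,1,0,0; 0,0,1,1; 0,0,0,-1]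
    + emb !![1,0,0,0; 0,1,1,1; 0,0,-1,-1; 0,0,1,0]
    + emb !![1,1,1,1; 0,-1,-1,-1; 0,1,0,0; 0,0,1,0]

/-- The inverse-star map: for Γ = ∑ aₖ Mₖ, Γ^{-∗} = ∑ aₖ Mₖ⁻¹. -/
noncomputable def invStar (Γ : QM4) : QM4 :=
  Finsupp.sum Γ.coeff (fun M a => MonoidAlgebra.single M⁻¹ a)

/-- The 4-cycle (1234) (on Fin 4: 0↦1↦2↦3↦0). -/
def c1234 : Equiv.Perm (Fin 4) := Equiv.swap 0 1 * Equiv.swap 1 2 * Equiv.swap 2 3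

/-- The sum ∑_{σ∈C₄} σ over the cyclic group C₄ = {e,(1234),(13)(24),(1432)}. -/
noncomputable def C4sum : QM4 :=
  emb 1 + emb (pm c1234) + emb (pm (c1234 ^ 2)) + emb (pm (c1234 ^ 3))

/-- J = diag(0,1,1,1). -/
def J : M4 := !![0,0,0,0; 0,1,0,0; 0,0,1,0; 0,0,0,1]

def T1 : M4 := !![0,0,0,0; 0,1,0,0; 0,1,1,0; 0,1,1,1]
def T2 : M4 := !![0,0,0,0; 0,1,0,0; 0,0,1,0; 0,1,1,1]
def T3 : M4 := !![0,0,0,0; 0,1,0,0; 0,0,1,1; 0,1,1,0]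
def T4 : M4 := !![0,0,0,0; 0,1,1,0; 0,0,0,1; 0,1,0,0]

/-!
`Γ ↦ Γ^{-∗}` is induced by `A ↦ A⁻¹` on `M₄(ℤ)`, which reverses products for *all* matrices
(Mathlib's `⁻¹` sends singular matrices to `0`), so it is an anti-homomorphism of `ℚ[M₄(ℤ)]`.
As `C₄` is a group, `(∑σ)^{-∗} = ∑σ`, and the left-hand side becomes `(∑σ) · (ΨS)^{-∗} J`.
Writing `Ψ = ∑ᵢ Ψᵢ`, the unimodular matrices `ΨᵢS` satisfy `ΨᵢS · Tᵢ = J` with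
`Tᵢ = T₂, T₃, T₄, σ³J` (`σ = (1234)`), so `(ΨᵢS)⁻¹ J = Tᵢ`; the last term is absorbed by
`(∑σ) σ³ = ∑σ`.
-/

namespace MonoidAlgebra

variable {R M N : Type*} [CommSemiring R] [Mul M] [Mul N]

theorem mapDomain_mul_rev {f : M → N} (hf : ∀ a b, f (a * b) = f b * f a) (x y : R[M]) :
    mapDomain f (x * y) = mapDomain f y * mapDomain f x := by
  induction x using induction_linear with
  | zero => simp only [zero_mul, mul_zero, mapDomain_zero]
  | add x x' hx hx' => simp only [add_mul, mul_add, mapDomain_add, hx, hx']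
  | single a r =>
    induction y using induction_linear with
    | zero => simp only [zero_mul, mul_zero, mapDomain_zero]
    | add y y' hy hy' => simp only [mul_add, add_mul, mapDomain_add, hy, hy']
    | single b s => simp only [single_mul_single, mapDomain_single, hf, mul_comm r s]

end MonoidAlgebra

open MonoidAlgebra

theorem invStar_eq_mapDomain (x : QM4) : invStar x = mapDomain (·⁻¹) x := by
  ext1
  simp [invStar, mapDomain, coeff_finsuppSum, Finsupp.mapDomain]

theorem invStar_add (x y : QM4) : invStar (x + y) = invStar x + invStar y := by
  simp only [invStar_eq_mapDomain, mapDomain_add]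

theorem invStar_mul (x y : QM4) : invStar (x * y) = invStar y * invStar x := by
  simp only [invStar_eq_mapDomain]
  exact mapDomain_mul_rev Matrix.mul_inv_rev x y

theorem invStar_emb (A : M4) : invStar (emb A) = emb A⁻¹ := by
  simp [invStar_eq_mapDomain, emb, mapDomain_single]

theorem emb_mul (A B : M4) : emb A * emb B = emb (A * B) := by
  simp [emb, single_mul_single]

theorem invStar_emb_mul_emb_of_mul_eq {A T N : M4} (hA : IsUnit A.det) (h : A * T = N) :
    invStar (emb A) * emb N = emb T := by
  rw [invStar_emb, emb_mul, ← h, Matrix.nonsing_inv_mul_cancel_left _ _ hA]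

theorem pm_one : pm 1 = 1 := by decide

theorem pm_mul (σ τ : Equiv.Perm (Fin 4)) : pm (σ * τ) = pm σ * pm τ := by
  ext i j
  simp [pm, Matrix.mul_apply]
  rfl

theorem invStar_emb_pm (σ : Equiv.Perm (Fin 4)) : invStar (emb (pm σ)) = emb (pm σ⁻¹) := by
  rw [invStar_emb, Matrix.inv_eq_right_inv (by rw [← pm_mul, mul_inv_cancel, pm_one])]

theorem invStar_C4sum : invStar C4sum = C4sum := by
  have h0 : invStar (emb 1) = emb 1 := by rw [invStar_emb, inv_one]
  have h1 : c1234⁻¹ = c1234 ^ 3 := by decide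
  have h2 : (c1234 ^ 2)⁻¹ = c1234 ^ 2 := by decide
  have h3 : (c1234 ^ 3)⁻¹ = c1234 := by decide
  simp only [C4sum, invStar_add, h0, invStar_emb_pm, h1, h2, h3]
  abel

theorem C4sum_mul_emb_pm_c1234_pow_three : C4sum * emb (pm (c1234 ^ 3)) = C4sum := by
  have h1 : c1234 * c1234 ^ 3 = 1 := by decide
  have h2 : c1234 ^ 2 * c1234 ^ 3 = c1234 := by decide
  have h3 : c1234 ^ 3 * c1234 ^ 3 = c1234 ^ 2 := by decide
  simp only [C4sum, add_mul, emb_mul, one_mul, ← pm_mul, h1, h2, h3, pm_one]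
  abel

theorem invStar_Psi_mul_S_mul_J :
    invStar (Psi * emb !![1,0,0,0; 0,1,0,0; 0,0,1,0; -1,-1,-1,1]) * emb J
      = emb T2 + emb T3 + emb T4 + emb (pm (c1234 ^ 3) * J) := by
  simp only [Psi, add_mul, emb_mul, one_mul, invStar_add]
  rw [invStar_emb_mul_emb_of_mul_eq (T := T2), invStar_emb_mul_emb_of_mul_eq (T := T3),
    invStar_emb_mul_emb_of_mul_eq (T := T4),
    invStar_emb_mul_emb_of_mul_eq (T := pm (c1234 ^ 3) * J)]
  all_goals first
    | exact Int.isUnit_iff.mpr (by decide)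
    | decide

/-- (ΨS·∑_{σ∈C₄}σ)^{-∗}·J = (∑_{σ∈C₄}σ)·(T₂+T₃+T₄+J) in ℚ[M₄(ℤ)]. -/
theorem lem_2_2_eq4 :
    invStar (Psi * emb !![1,0,0,0; 0,1,0,0; 0,0,1,0; -1,-1,-1,1] * C4sum) * emb J
      = C4sum * (emb T2 + emb T3 + emb T4 + emb J) := by
  rw [invStar_mul, invStar_C4sum, mul_assoc, invStar_Psi_mul_S_mul_J, ← emb_mul, mul_add C4sum,
    ← mul_assoc C4sum, C4sum_mul_emb_pm_c1234_pow_three, ← mul_add]
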